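/- arXiv:math/0503421 — 5 statements merged into one kernel-verified Lean document; each statement's English description precedes it below -/
import Mathlib

section
/- Let m and μ be finite positive Borel measures on [0,1] such that μ(I_w) > 0 for every b-adic interval I_w. Let N ≥ 1 be an integer, α ≥ 0, and let (ε_n)_{n≥1} and (η_n)_{n≥1} be sequences of positive real numbers. If the series ∑_{n≥1} S_n^{N,ε_n,η_n}(m,μ,α) converges, then the set E^μ_α(N,ε̃) is of full m-measure, i.e. m([0,1] \ E^μ_α(N,ε̃)) = 0. -/
open MeasureTheory

/-- The closed `b`-adic interval `[k b^{-n}, (k+1) b^{-n}]`. -/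
noncomputable def badicI (b n k : ℕ) : Set ℝ :=
  Set.Icc ((k : ℝ) / (b : ℝ) ^ n) (((k : ℝ) + 1) / (b : ℝ) ^ n)

/-- The index of the `b`-adic interval of generation `n` containing `t` (for `t ∈ [0,1)`). -/
noncomputable def idx (b n : ℕ) (t : ℝ) : ℕ :=
  min ⌊t * (b : ℝ) ^ n⌋₊ (b ^ n - 1)

/-- The quantity `S_n^{N,ε,η}(m,μ,α)`. -/
noncomputable def Sq (b N n : ℕ) (ε η α : ℝ) (m μ : Measure ℝ) : ℝ :=
  ∑ γ ∈ ({-1, 1} : Finset ℤ),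
    (b : ℝ) ^ ((n : ℝ) * (α - (γ : ℝ) * ε) * (γ : ℝ) * η) *
      ∑ k ∈ Finset.range (b ^ n), ∑ l ∈ Finset.range (b ^ n),
        if ((k : ℤ) - (l : ℤ)).natAbs ≤ N then
          (m (badicI b n k)).toReal * ((μ (badicI b n l)).toReal) ^ ((γ : ℝ) * η)
        else 0

/-- The set `E^μ_α(N,ε,γ)` at generation `n`. -/
noncomputable def Eset (b N n : ℕ) (ε α : ℝ) (γ : ℤ) (μ : Measure ℝ) : Set ℝ :=
  {t | t ∈ Set.Icc (0:ℝ) 1 ∧ ∀ k < b ^ n, ((k : ℤ) - (idx b n t : ℤ)).natAbs ≤ N →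
    (b : ℝ) ^ ((γ : ℝ) * (n : ℝ) * (α - (γ : ℝ) * ε)) *
      ((μ (badicI b n k)).toReal) ^ ((γ : ℝ)) ≤ 1}

/-
Borel–Cantelli. At generation `n`, a point `t ∈ [0,1]` leaves `E^μ_α(N,ε_n,γ)` only if some
interval `I_w` with `δ(w, w^{(n)}(t)) ≤ N` has weight `x_w = b^{γn(α-γε_n)} μ(I_w)^γ > 1`, and then
`1 < x_w^{η_n}`. Covering the bad set by the intervals `I_v` with `δ(v,w) ≤ N` and applying this
Markov-type bound gives `m(bad set) ≤ S_n^{N,ε_n,η_n}(m,μ,α)`, which is summable.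
-/

open Filter Finset

lemma idx_lt {b : ℕ} (hb : 0 < b) (n : ℕ) (t : ℝ) : idx b n t < b ^ n := by
  have := pow_pos hb n
  unfold idx
  omega

lemma mem_badicI_idx {b : ℕ} (hb : 0 < b) (n : ℕ) {t : ℝ} (ht : t ∈ Set.Icc (0:ℝ) 1) :
    t ∈ badicI b n (idx b n t) := by
  have hbn : (0:ℝ) < (b:ℝ) ^ n := by positivity
  have htb : 0 ≤ t * (b:ℝ) ^ n := mul_nonneg ht.1 hbn.le
  refine ⟨(div_le_iff₀ hbn).2 ?_, (le_div_iff₀ hbn).2 ?_⟩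
  · exact (Nat.cast_le.2 (min_le_left _ _)).trans (Nat.floor_le htb)
  · rcases le_total ⌊t * (b:ℝ) ^ n⌋₊ (b ^ n - 1) with h | h
    · rw [idx, min_eq_left h]
      exact (Nat.lt_floor_add_one _).le
    · rw [idx, min_eq_right h, Nat.cast_sub (Nat.one_le_pow _ _ hb)]
      push_cast
      nlinarith [ht.2]

/-- Union bound combined with Markov's inequality `𝟙{1 < x} ≤ x ^ η`. -/
lemma measure_setOf_exists_near_le {X : Type*} [MeasurableSpace X] (m : Measure X)
    [IsFiniteMeasure m] {s : Set X} {K : ℕ} {I : ℕ → Set X} {j : X → ℕ}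
    (hj : ∀ t ∈ s, j t < K ∧ t ∈ I (j t)) (r : ℕ → ℕ → Prop) [DecidableRel r]
    {x : ℕ → ℝ} (hx : ∀ l, 0 ≤ x l) {η : ℝ} (hη : 0 ≤ η) :
    m {t ∈ s | ∃ l < K, r (j t) l ∧ 1 < x l} ≤
      ENNReal.ofReal (∑ k ∈ range K, ∑ l ∈ range K,
        if r k l then (m (I k)).toReal * x l ^ η else 0) := by
  have hcover : {t ∈ s | ∃ l < K, r (j t) l ∧ 1 < x l} ⊆
      ⋃ k ∈ range K, ⋃ l ∈ range K, if r k l ∧ 1 < x l then I k else ∅ := by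
    rintro t ⟨ht, l, hl, hr, hxl⟩
    simp only [Set.mem_iUnion, mem_range]
    exact ⟨j t, (hj t ht).1, l, hl, by rw [if_pos ⟨hr, hxl⟩]; exact (hj t ht).2⟩
  have hterm : ∀ k l, m (if r k l ∧ 1 < x l then I k else ∅) ≤
      ENNReal.ofReal (if r k l then (m (I k)).toReal * x l ^ η else 0) := by
    intro k l
    by_cases h : r k l ∧ 1 < x l
    · rw [if_pos h, if_pos h.1, ENNReal.le_ofReal_iff_toReal_le (measure_ne_top m (I k))
        (mul_nonneg ENNReal.toReal_nonneg (Real.rpow_nonneg (hx l) η))]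
      exact le_mul_of_one_le_right ENNReal.toReal_nonneg (Real.one_le_rpow h.2.le hη)
    · simp [if_neg h]
  have hnonneg : ∀ k l, 0 ≤ if r k l then (m (I k)).toReal * x l ^ η else 0 := fun k l =>
    ite_nonneg (mul_nonneg ENNReal.toReal_nonneg (Real.rpow_nonneg (hx l) η)) le_rfl
  calc m {t ∈ s | ∃ l < K, r (j t) l ∧ 1 < x l}
      ≤ ∑ k ∈ range K, ∑ l ∈ range K, m (if r k l ∧ 1 < x l then I k else ∅) :=
        (measure_mono hcover).trans <| (measure_biUnion_finset_le _ _).trans <|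
          sum_le_sum fun k _ => measure_biUnion_finset_le _ _
    _ ≤ ∑ k ∈ range K, ∑ l ∈ range K,
          ENNReal.ofReal (if r k l then (m (I k)).toReal * x l ^ η else 0) :=
        sum_le_sum fun k _ => sum_le_sum fun l _ => hterm k l
    _ = _ := by
        rw [ENNReal.ofReal_sum_of_nonneg fun k _ => sum_nonneg fun l _ => hnonneg k l]
        exact sum_congr rfl fun k _ =>
          (ENNReal.ofReal_sum_of_nonneg fun l _ => hnonneg k l).symm

/-- The weight `b^{γn(α-γε)} μ(I_k)^γ` compared with `1` in the definition of `Eset`. -/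
noncomputable def scaledMass (b n : ℕ) (ε α : ℝ) (γ : ℤ) (μ : Measure ℝ) (k : ℕ) : ℝ :=
  (b : ℝ) ^ ((γ : ℝ) * (n : ℝ) * (α - (γ : ℝ) * ε)) * ((μ (badicI b n k)).toReal) ^ ((γ : ℝ))

/-- The `γ`-summand of `Sq`. -/
noncomputable def SqTerm (b N n : ℕ) (ε η α : ℝ) (m μ : Measure ℝ) (γ : ℤ) : ℝ :=
  (b : ℝ) ^ ((n : ℝ) * (α - (γ : ℝ) * ε) * (γ : ℝ) * η) *
    ∑ k ∈ range (b ^ n), ∑ l ∈ range (b ^ n),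
      if ((k : ℤ) - (l : ℤ)).natAbs ≤ N then
        (m (badicI b n k)).toReal * ((μ (badicI b n l)).toReal) ^ ((γ : ℝ) * η)
      else 0

section

variable {b N n : ℕ} {ε η α : ℝ} {m μ : Measure ℝ} {γ : ℤ}

lemma scaledMass_nonneg {k : ℕ} : 0 ≤ scaledMass b n ε α γ μ k :=
  mul_nonneg (Real.rpow_nonneg (Nat.cast_nonneg b) _) (Real.rpow_nonneg ENNReal.toReal_nonneg _)

lemma scaledMass_rpow (k : ℕ) : scaledMass b n ε α γ μ k ^ η =
    (b : ℝ) ^ ((n : ℝ) * (α - (γ : ℝ) * ε) * (γ : ℝ) * η) *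
      ((μ (badicI b n k)).toReal) ^ ((γ : ℝ) * η) := by
  rw [scaledMass, Real.mul_rpow (Real.rpow_nonneg (Nat.cast_nonneg b) _)
    (Real.rpow_nonneg ENNReal.toReal_nonneg _), ← Real.rpow_mul (Nat.cast_nonneg b),
    ← Real.rpow_mul ENNReal.toReal_nonneg]
  ring_nf

lemma SqTerm_eq : SqTerm b N n ε η α m μ γ =
    ∑ k ∈ range (b ^ n), ∑ l ∈ range (b ^ n),
      if ((k : ℤ) - (l : ℤ)).natAbs ≤ N then
        (m (badicI b n k)).toReal * scaledMass b n ε α γ μ l ^ η else 0 := by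
  simp_rw [SqTerm, mul_sum, scaledMass_rpow, mul_ite, mul_zero, mul_left_comm]

lemma SqTerm_nonneg : 0 ≤ SqTerm b N n ε η α m μ γ := by
  rw [SqTerm_eq]
  exact sum_nonneg fun k _ => sum_nonneg fun l _ => ite_nonneg
    (mul_nonneg ENNReal.toReal_nonneg (Real.rpow_nonneg scaledMass_nonneg η)) le_rfl

lemma Sq_eq_sum_SqTerm :
    Sq b N n ε η α m μ = ∑ γ ∈ ({-1, 1} : Finset ℤ), SqTerm b N n ε η α m μ γ :=
  rfl

lemma Sq_nonneg : 0 ≤ Sq b N n ε η α m μ :=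
  sum_nonneg fun _ _ => SqTerm_nonneg

lemma diff_Eset_subset :
    Set.Icc 0 1 \ Eset b N n ε α γ μ ⊆ {t ∈ Set.Icc 0 1 | ∃ l < b ^ n,
      ((idx b n t : ℤ) - (l : ℤ)).natAbs ≤ N ∧ 1 < scaledMass b n ε α γ μ l} := by
  rintro t ⟨ht, hE⟩
  simp only [Eset, Set.mem_ofPred_eq, not_and, not_forall, not_le] at hE
  obtain ⟨l, hl, hnear, hbig⟩ := hE ht
  exact ⟨ht, l, hl, by omega, hbig⟩

lemma measure_diff_Eset_le [IsFiniteMeasure m] (hb : 0 < b) (hη : 0 ≤ η) :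
    m (Set.Icc 0 1 \ Eset b N n ε α γ μ) ≤ ENNReal.ofReal (SqTerm b N n ε η α m μ γ) := by
  rw [SqTerm_eq]
  exact (measure_mono diff_Eset_subset).trans <|
    measure_setOf_exists_near_le m (fun t ht => ⟨idx_lt hb n t, mem_badicI_idx hb n ht⟩)
      (fun k l => ((k : ℤ) - (l : ℤ)).natAbs ≤ N) (fun _ => scaledMass_nonneg) hη

lemma measure_diff_inter_Eset_le [IsFiniteMeasure m] (hb : 0 < b) (hη : 0 ≤ η) :
    m (Set.Icc 0 1 \ (Eset b N n ε α (-1) μ ∩ Eset b N n ε α 1 μ)) ≤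
      ENNReal.ofReal (Sq b N n ε η α m μ) := by
  rw [Set.sdiff_inter, Sq_eq_sum_SqTerm, sum_pair (by decide),
    ENNReal.ofReal_add SqTerm_nonneg SqTerm_nonneg]
  exact (measure_union_le _ _).trans (add_le_add (measure_diff_Eset_le hb hη)
    (measure_diff_Eset_le hb hη))

end

/-- Borel–Cantelli. -/
lemma measure_diff_iUnion_iInter_eq_zero {X : Type*} [MeasurableSpace X] (m : Measure X)
    (A : Set X) (F : ℕ → Set X) (hsum : ∑' i, m (A \ F (i + 1)) ≠ ⊤) :
    m (A \ ⋃ p ∈ {p : ℕ | 1 ≤ p}, ⋂ n ∈ {n : ℕ | p ≤ n}, F n) = 0 := by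
  refine measure_mono_null ?_ (measure_limsup_atTop_eq_zero hsum)
  rintro t ⟨htA, htF⟩
  simp only [Set.mem_iUnion, Set.mem_iInter, Set.mem_ofPred_eq, not_exists, not_forall] at htF
  rw [mem_limsup_iff_frequently_mem, frequently_atTop]
  intro a
  obtain ⟨n, hn, htn⟩ := htF (a + 1) (by omega)
  exact ⟨n - 1, by omega, htA, by rwa [Nat.sub_add_cancel (by omega)]⟩

theorem full_measure_of_summable_S_general
    (b : ℕ) (hb : 2 ≤ b) (N : ℕ) (α : ℝ)
    (m μ : Measure ℝ) [IsFiniteMeasure m]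
    (ε η : ℕ → ℝ) (hη : ∀ n, 1 ≤ n → 0 < η n)
    (hsum : Summable fun n : ℕ => Sq b N (n + 1) (ε (n + 1)) (η (n + 1)) α m μ) :
    m (Set.Icc (0:ℝ) 1 \
        ⋃ p ∈ {p : ℕ | 1 ≤ p}, ⋂ n ∈ {n : ℕ | p ≤ n},
          (Eset b N n (ε n) α (-1) μ ∩ Eset b N n (ε n) α 1 μ)) = 0 := by
  apply measure_diff_iUnion_iInter_eq_zero
  have hbound : ∀ i : ℕ, m (Set.Icc 0 1 \ (Eset b N (i + 1) (ε (i + 1)) α (-1) μ ∩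
      Eset b N (i + 1) (ε (i + 1)) α 1 μ)) ≤
        ENNReal.ofReal (Sq b N (i + 1) (ε (i + 1)) (η (i + 1)) α m μ) := fun i =>
    measure_diff_inter_Eset_le (by omega) (hη (i + 1) (by omega)).le
  refine ne_top_of_le_ne_top ?_ (ENNReal.tsum_le_tsum hbound)
  rw [← ENNReal.ofReal_tsum_of_nonneg (fun _ => Sq_nonneg) hsum]
  exact ENNReal.ofReal_ne_top

/-- If `∑_{n ≥ 1} S_n^{N,ε_n,η_n}(m,μ,α) < ∞`, then `E^μ_α(N,ε̃)` has full `m`-measure. -/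
theorem full_measure_of_summable_S
    (b : ℕ) (hb : 2 ≤ b) (N : ℕ) (hN : 1 ≤ N) (α : ℝ) (hα : 0 ≤ α)
    (m μ : Measure ℝ) [IsFiniteMeasure m] [IsFiniteMeasure μ]
    (hμpos : ∀ n k, k < b ^ n → 0 < μ (badicI b n k))
    (ε η : ℕ → ℝ) (hε : ∀ n, 1 ≤ n → 0 < ε n) (hη : ∀ n, 1 ≤ n → 0 < η n)
    (hsum : Summable fun n : ℕ => Sq b N (n + 1) (ε (n + 1)) (η (n + 1)) α m μ) :
    m (Set.Icc (0:ℝ) 1 \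
        ⋃ p ∈ {p : ℕ | 1 ≤ p}, ⋂ n ∈ {n : ℕ | p ≤ n},
          (Eset b N n (ε n) α (-1) μ ∩ Eset b N n (ε n) α 1 μ)) = 0 :=
  full_measure_of_summable_S_general b hb N α m μ ε η hη hsum
end

section
/- Fix an integer b ≥ 2, a compact interval K ⊂ ℝ with positive length, constants h > 1, C > 0, an exponent α ∈ (0, (h−1)/h), and η > 0. Suppose that for every j ≥ 1 and every word w ∈ A^j one is given a family of real random variables (Y^w_q)_{q ∈ K} such that E(|Y^w_q − Y^w_{q'}|^h) ≤ C|q − q'|^h for all q, q' ∈ K. Then with probability one, for all sufficiently large j, for every w ∈ A^j, every integer n ≥ j^{1+η}, and every pair of dyadic rationals q, q' ∈ K of generation n (i.e. q, q' ∈ 2^{−n}ℤ) with |q − q'| = 2^{−n}, one has |Y^w_q − Y^w_{q'}| ≤ |q − q'|^α. -/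
/-!
By Markov's inequality, an increment of `Y^w` over one dyadic step of generation `n` exceeds
`2^{-nα}` with probability at most `C 2^{-n(h - αh)}`. There are about `(v - u + 1) 2^n` such
steps in `[u, v]`, so since `δ := h - αh - 1 > 0` the probability of a bad step of generation `n`
is `O(2^{-nδ})`, and summing over `n ≥ j^{1+η}` and the `b^j` words gives
`O(b^j 2^{-δ j^{1+η}/2})`. The superlinear exponent `j^{1+η}` makes this summable in `j`, and
Borel–Cantelli concludes.
-/

open MeasureTheory Filter
open scoped ENNReal

theorem Int.card_Icc_ceil_floor_le {a b : ℝ} (hab : a ≤ b) :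
    ((Finset.Icc ⌈a⌉ ⌊b⌋).card : ℝ) ≤ b - a + 1 := by
  rw [Int.card_Icc]
  rcases le_total (⌊b⌋ + 1 - ⌈a⌉) 0 with hle | hle
  · rw [Int.toNat_of_nonpos hle]
    push_cast
    linarith
  · rw [← Int.cast_natCast, Int.toNat_of_nonneg hle]
    push_cast
    linarith [Int.floor_le b, Int.le_ceil a]

theorem Int.eq_add_one_or_of_abs_div_sub_div {a : ℝ} (ha : 0 < a) {k k' : ℤ}
    (hkk' : |(k : ℝ) / a - k' / a| = 1 / a) : k' = k + 1 ∨ k = k' + 1 := by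
  rw [← sub_div, abs_div, abs_of_pos ha, div_left_inj' ha.ne'] at hkk'
  have : |k - k'| = 1 := by exact_mod_cast hkk'
  rcases abs_eq (zero_le_one' ℤ) |>.mp this with h | h <;> omega

theorem summable_pow_mul_rpow_rpow {s η : ℝ} (hs0 : 0 ≤ s) (hs1 : s < 1) (hη : 0 < η) (b : ℝ) :
    Summable fun j : ℕ ↦ b ^ j * s ^ ((j : ℝ) ^ (1 + η)) := by
  obtain ⟨m, hm⟩ : ∃ m : ℕ, |b| * s ^ m ≤ 1 / 2 :=
    ((tendsto_pow_atTop_nhds_zero_of_lt_one hs0 hs1).const_mul |b|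
      |>.eventually_le_const (by norm_num)).exists
  refine .of_norm_bounded_eventually_nat summable_geometric_two ?_
  filter_upwards [((tendsto_rpow_atTop hη).comp tendsto_natCast_atTop_atTop).eventually_ge_atTop
    (m : ℝ)] with j hj
  have hexp : (m : ℝ) * j ≤ (j : ℝ) ^ (1 + η) := by
    rw [Real.rpow_one_add' (Nat.cast_nonneg j) (by positivity), mul_comm]
    exact mul_le_mul_of_nonneg_left hj (Nat.cast_nonneg j)
  calc ‖b ^ j * s ^ ((j : ℝ) ^ (1 + η))‖
      = |b| ^ j * s ^ ((j : ℝ) ^ (1 + η)) := by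
        rw [norm_mul, norm_pow, Real.norm_eq_abs, Real.norm_of_nonneg (by positivity)]
    _ ≤ |b| ^ j * (s ^ m) ^ j := by
        gcongr
        rw [← Real.rpow_natCast, ← Real.rpow_natCast, ← Real.rpow_mul hs0]
        exact Real.rpow_le_rpow_of_exponent_ge' hs0 hs1.le (by positivity) hexp
    _ = (|b| * s ^ m) ^ j := (mul_pow _ _ _).symm
    _ ≤ (1 / 2) ^ j := by gcongr

section Dyadic

variable {Ω : Type*}

def dyadicIncrementExceeds (X : ℝ → Ω → ℝ) (u v α : ℝ) (n : ℕ) (k : ℤ) : Set Ω :=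
  {ω | (k : ℝ) / 2 ^ n ∈ Set.Icc u v ∧ ((k : ℝ) + 1) / 2 ^ n ∈ Set.Icc u v ∧
    (1 / 2 ^ n : ℝ) ^ α < |X (k / 2 ^ n) ω - X ((k + 1) / 2 ^ n) ω|}

variable {X : ℝ → Ω → ℝ} {u v h C α : ℝ}

theorem abs_sub_le_of_forall_notMem_dyadicIncrementExceeds {ω : Ω} {n : ℕ}
    (hω : ∀ k, ω ∉ dyadicIncrementExceeds X u v α n k) {q q' : ℝ}
    (hq : q ∈ Set.Icc u v) (hq' : q' ∈ Set.Icc u v)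
    (hkq : ∃ k : ℤ, q = k / 2 ^ n) (hkq' : ∃ k : ℤ, q' = k / 2 ^ n)
    (hqq' : |q - q'| = 1 / 2 ^ n) :
    |X q ω - X q' ω| ≤ |q - q'| ^ α := by
  have hstep : ∀ k : ℤ, (k : ℝ) / 2 ^ n ∈ Set.Icc u v → ((k : ℝ) + 1) / 2 ^ n ∈ Set.Icc u v →
      |X (k / 2 ^ n) ω - X ((k + 1) / 2 ^ n) ω| ≤ (1 / 2 ^ n) ^ α :=
    fun k hk hk' ↦ not_lt.mp fun hlt ↦ hω k ⟨hk, hk', hlt⟩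
  obtain ⟨k, rfl⟩ := hkq
  obtain ⟨k', rfl⟩ := hkq'
  rcases Int.eq_add_one_or_of_abs_div_sub_div (by positivity) hqq' with rfl | rfl
  · rw [hqq']
    push_cast at hq' ⊢
    exact hstep k hq hq'
  · rw [hqq', abs_sub_comm]
    push_cast at hq ⊢
    exact hstep k' hq' hq

variable [MeasurableSpace Ω] {P : Measure Ω}

theorem measure_lt_abs_le_of_lintegral_rpow_le {f : Ω → ℝ} (hf : AEMeasurable f P) {h t M : ℝ}
    (hh : 0 < h) (ht : 0 < t)
    (hM : ∫⁻ ω, ENNReal.ofReal (|f ω| ^ h) ∂P ≤ ENNReal.ofReal M) :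
    P {ω | t < |f ω|} ≤ ENNReal.ofReal (M / t ^ h) := by
  have hth : 0 < t ^ h := Real.rpow_pos_of_pos ht h
  calc P {ω | t < |f ω|}
      ≤ P {ω | ENNReal.ofReal (t ^ h) ≤ ENNReal.ofReal (|f ω| ^ h)} :=
        measure_mono fun ω hω ↦ ENNReal.ofReal_le_ofReal <|
          Real.rpow_le_rpow ht.le (le_of_lt hω) hh.le
    _ ≤ (∫⁻ ω, ENNReal.ofReal (|f ω| ^ h) ∂P) / ENNReal.ofReal (t ^ h) :=
        meas_ge_le_lintegral_div
          ((hf.norm.pow_const h).ennreal_ofReal) (by simpa using hth) ENNReal.ofReal_ne_top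
    _ ≤ ENNReal.ofReal M / ENNReal.ofReal (t ^ h) := by gcongr
    _ = ENNReal.ofReal (M / t ^ h) := (ENNReal.ofReal_div_of_pos hth).symm

theorem measure_dyadicIncrementExceeds_le (hX : ∀ q, AEMeasurable (X q) P) (hh : 0 < h)
    (hmom : ∀ q q' : ℝ, q ∈ Set.Icc u v → q' ∈ Set.Icc u v →
      ∫⁻ ω, ENNReal.ofReal (|X q ω - X q' ω| ^ h) ∂P ≤ ENNReal.ofReal (C * |q - q'| ^ h))
    (n : ℕ) (k : ℤ) :
    P (dyadicIncrementExceeds X u v α n k) ≤ ENNReal.ofReal (C * (1 / 2 ^ n) ^ (h - α * h)) := by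
  set ε : ℝ := 1 / 2 ^ n
  have hε : 0 < ε := by positivity
  by_cases hq : (k : ℝ) / 2 ^ n ∈ Set.Icc u v ∧ ((k : ℝ) + 1) / 2 ^ n ∈ Set.Icc u v
  · have hdist : |(k : ℝ) / 2 ^ n - (k + 1) / 2 ^ n| = ε := by
      rw [← sub_div, sub_add_cancel_left, abs_div, abs_neg, abs_one, abs_of_pos (by positivity)]
    have hmarkov := measure_lt_abs_le_of_lintegral_rpow_le ((hX _).sub (hX _)) hh
      (Real.rpow_pos_of_pos hε α) (hdist ▸ hmom _ _ hq.1 hq.2)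
    rw [← Real.rpow_mul hε.le, mul_div_assoc, ← Real.rpow_sub hε] at hmarkov
    exact (measure_mono fun ω hω ↦ hω.2.2).trans hmarkov
  · calc P (dyadicIncrementExceeds X u v α n k) = 0 :=
          measure_mono_null (fun ω hω ↦ (hq ⟨hω.1, hω.2.1⟩).elim) measure_empty
      _ ≤ _ := zero_le

theorem tsum_measure_dyadicIncrementExceeds_le (hX : ∀ q, AEMeasurable (X q) P) (hh : 0 < h)
    (huv : u ≤ v)
    (hmom : ∀ q q' : ℝ, q ∈ Set.Icc u v → q' ∈ Set.Icc u v →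
      ∫⁻ ω, ENNReal.ofReal (|X q ω - X q' ω| ^ h) ∂P ≤ ENNReal.ofReal (C * |q - q'| ^ h))
    (n : ℕ) :
    ∑' k : ℤ, P (dyadicIncrementExceeds X u v α n k)
      ≤ ENNReal.ofReal (C * (v - u + 1) * (1 / 2 ^ n) ^ (h - α * h - 1)) := by
  have h2n : (0 : ℝ) < 2 ^ n := by positivity
  set F := Finset.Icc ⌈u * 2 ^ n⌉ ⌊v * 2 ^ n⌋
  have hF : ∀ k ∉ F, P (dyadicIncrementExceeds X u v α n k) = 0 := by
    intro k hk
    refine measure_mono_null (fun ω hω ↦ hk ?_) measure_empty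
    obtain ⟨⟨hu, -⟩, ⟨-, hv⟩, -⟩ := hω
    rw [Finset.mem_Icc, Int.ceil_le, Int.le_floor]
    rw [le_div_iff₀ h2n] at hu
    rw [div_le_iff₀ h2n] at hv
    constructor <;> linarith
  have hcard : (F.card : ℝ) ≤ (v - u + 1) * 2 ^ n := by
    have := Int.card_Icc_ceil_floor_le (mul_le_mul_of_nonneg_right huv h2n.le)
    nlinarith [one_le_pow₀ (M₀ := ℝ) (n := n) one_le_two]
  calc ∑' k : ℤ, P (dyadicIncrementExceeds X u v α n k)
      = ∑ k ∈ F, P (dyadicIncrementExceeds X u v α n k) := tsum_eq_sum hF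
    _ ≤ F.card * ENNReal.ofReal (C * (1 / 2 ^ n) ^ (h - α * h)) := by
        rw [← nsmul_eq_mul]
        exact Finset.sum_le_card_nsmul _ _ _
          fun k _ ↦ measure_dyadicIncrementExceeds_le hX hh hmom n k
    _ ≤ ENNReal.ofReal ((v - u + 1) * 2 ^ n)
          * ENNReal.ofReal (C * (1 / 2 ^ n) ^ (h - α * h)) := by
        rw [← ENNReal.ofReal_natCast]
        gcongr
    _ = ENNReal.ofReal (C * (v - u + 1) * (1 / 2 ^ n) ^ (h - α * h - 1)) := by
        rw [← ENNReal.ofReal_mul (hcard.trans' (Nat.cast_nonneg _)),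
          Real.rpow_sub_one (by positivity)]
        field_simp

theorem measure_iUnion_dyadicIncrementExceeds_le (hX : ∀ q, AEMeasurable (X q) P) (hh : 0 < h)
    (hαh : α * h + 1 ≤ h) (huv : u ≤ v)
    (hmom : ∀ q q' : ℝ, q ∈ Set.Icc u v → q' ∈ Set.Icc u v →
      ∫⁻ ω, ENNReal.ofReal (|X q ω - X q' ω| ^ h) ∂P ≤ ENNReal.ofReal (C * |q - q'| ^ h))
    (x : ℝ) :
    P (⋃ (n : ℕ) (_ : x ≤ n) (k : ℤ), dyadicIncrementExceeds X u v α n k)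
      ≤ ENNReal.ofReal (C * (v - u + 1))
        * ENNReal.ofReal (((1 / 2 : ℝ) ^ ((h - α * h - 1) / 2)) ^ x)
        * (1 - ENNReal.ofReal ((1 / 2 : ℝ) ^ ((h - α * h - 1) / 2)))⁻¹ := by
  set s : ℝ := (1 / 2 : ℝ) ^ ((h - α * h - 1) / 2)
  have hs0 : 0 < s := by positivity
  have hs1 : s ≤ 1 := Real.rpow_le_one (by norm_num) (by norm_num) (by linarith)
  -- `s ^ n` appears twice: one factor is spent on `n ≥ x`, the other is summed over `n`
  have hsplit : ∀ n : ℕ, (1 / 2 ^ n : ℝ) ^ (h - α * h - 1) = s ^ n * s ^ n := fun n ↦ by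
    rw [← one_div_pow, ← Real.rpow_natCast_mul (by norm_num),
      ← Real.rpow_mul_natCast (by norm_num), ← Real.rpow_add (by norm_num)]
    ring_nf
  calc P (⋃ (n : ℕ) (_ : x ≤ n) (k : ℤ), dyadicIncrementExceeds X u v α n k)
      ≤ ∑' n : ℕ, P (⋃ (_ : x ≤ n) (k : ℤ), dyadicIncrementExceeds X u v α n k) :=
        measure_iUnion_le _
    _ ≤ ∑' n : ℕ,
          ENNReal.ofReal (C * (v - u + 1)) * ENNReal.ofReal (s ^ x) * ENNReal.ofReal s ^ n := by
        refine ENNReal.tsum_le_tsum fun n ↦ ?_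
        by_cases hxn : x ≤ n
        · calc P (⋃ (_ : x ≤ n) (k : ℤ), dyadicIncrementExceeds X u v α n k)
              ≤ ∑' k : ℤ, P (dyadicIncrementExceeds X u v α n k) :=
                (measure_mono (Set.iUnion_subset fun _ ↦ subset_rfl)).trans (measure_iUnion_le _)
            _ ≤ ENNReal.ofReal (C * (v - u + 1) * (s ^ n * s ^ n)) :=
                hsplit n ▸ tsum_measure_dyadicIncrementExceeds_le hX hh huv hmom n
            _ ≤ _ := by
                rw [← mul_assoc, ENNReal.ofReal_mul' (by positivity),
                  ENNReal.ofReal_mul' (by positivity), ← ENNReal.ofReal_pow hs0.le]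
                gcongr
                rw [← Real.rpow_natCast]
                exact Real.rpow_le_rpow_of_exponent_ge hs0 hs1 hxn
        · simp [hxn]
    _ = ENNReal.ofReal (C * (v - u + 1)) * ENNReal.ofReal (s ^ x) * (1 - ENNReal.ofReal s)⁻¹ := by
        rw [ENNReal.tsum_mul_left, ENNReal.tsum_geometric]

end Dyadic

theorem tsum_natCast_pow_mul_ofReal_rpow_ne_top {s η : ℝ} (hs0 : 0 ≤ s) (hs1 : s < 1)
    (hη : 0 < η) (b : ℕ) :
    ∑' j : ℕ, (b : ℝ≥0∞) ^ j * ENNReal.ofReal (s ^ ((j : ℝ) ^ (1 + η))) ≠ ∞ := by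
  have hterm : ∀ j : ℕ, (b : ℝ≥0∞) ^ j * ENNReal.ofReal (s ^ ((j : ℝ) ^ (1 + η)))
      = ENNReal.ofReal ((b : ℝ) ^ j * s ^ ((j : ℝ) ^ (1 + η))) := fun j ↦ by
    rw [ENNReal.ofReal_mul (by positivity), ENNReal.ofReal_pow (Nat.cast_nonneg _),
      ENNReal.ofReal_natCast]
  simp_rw [hterm]
  rw [← ENNReal.ofReal_tsum_of_nonneg (fun j ↦ by positivity)
    (summable_pow_mul_rpow_rpow hs0 hs1 hη b)]
  exact ENNReal.ofReal_ne_top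

-- A word `w ∈ A^j` is encoded by its index `w < b ^ j`.
theorem holder_on_dyadics_general
    {Ω : Type*} [MeasurableSpace Ω] (P : Measure Ω)
    (b : ℕ) (u v : ℝ) (huv : u < v)
    (h C α η : ℝ) (hh : 1 < h) (hαh : α < (h - 1) / h)
    (hη : 0 < η)
    (Y : ℕ → ℕ → ℝ → Ω → ℝ)
    (hYmeas : ∀ j w q, Measurable (Y j w q))
    (hmom : ∀ j w, 1 ≤ j → w < b ^ j → ∀ q q' : ℝ,
      q ∈ Set.Icc u v → q' ∈ Set.Icc u v →
      ∫⁻ ω, ENNReal.ofReal (|Y j w q ω - Y j w q' ω| ^ h) ∂P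
        ≤ ENNReal.ofReal (C * |q - q'| ^ h)) :
    ∀ᵐ ω ∂P, ∃ J : ℕ, ∀ j, J ≤ j → ∀ w, w < b ^ j →
      ∀ n : ℕ, (j : ℝ) ^ ((1:ℝ) + η) ≤ (n : ℝ) →
      ∀ q q' : ℝ, q ∈ Set.Icc u v → q' ∈ Set.Icc u v →
        (∃ k : ℤ, q = (k : ℝ) / 2 ^ n) → (∃ k : ℤ, q' = (k : ℝ) / 2 ^ n) →
        |q - q'| = 1 / 2 ^ n →
        |Y j w q ω - Y j w q' ω| ≤ |q - q'| ^ α := by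
  have hh0 : 0 < h := by linarith
  have hαh' : α * h + 1 < h := by linarith [(lt_div_iff₀ hh0).mp hαh]
  set s : ℝ := (1 / 2 : ℝ) ^ ((h - α * h - 1) / 2)
  have hs1 : s < 1 := Real.rpow_lt_one (by norm_num) (by norm_num) (by linarith)
  set c := ENNReal.ofReal (C * (v - u + 1)) * (1 - ENNReal.ofReal s)⁻¹
  have hc : c ≠ ∞ := ENNReal.mul_ne_top ENNReal.ofReal_ne_top
    (ENNReal.inv_ne_top.mpr (tsub_pos_of_lt (ENNReal.ofReal_lt_one.mpr hs1)).ne')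
  set g : ℕ → ℝ≥0∞ := fun j ↦ (b : ℝ≥0∞) ^ j * ENNReal.ofReal (s ^ ((j : ℝ) ^ (1 + η)))
  set E : ℕ → Set Ω := fun j ↦ ⋃ w ∈ Finset.range (b ^ j),
    ⋃ (n : ℕ) (_ : (j : ℝ) ^ ((1 : ℝ) + η) ≤ n) (k : ℤ), dyadicIncrementExceeds (Y j w) u v α n k
  have hE : ∀ j, P (E (j + 1)) ≤ c * g (j + 1) := fun j ↦ by
    refine (measure_biUnion_finset_le _ _).trans ?_
    refine (Finset.sum_le_card_nsmul _ _ _ fun w hw ↦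
      measure_iUnion_dyadicIncrementExceeds_le (fun q ↦ (hYmeas _ w q).aemeasurable) hh0 hαh'.le
        huv.le (hmom _ w (Nat.le_add_left 1 j) (Finset.mem_range.mp hw)) _).trans_eq ?_
    simp only [g, c, Finset.card_range, nsmul_eq_mul, Nat.cast_pow]
    ring
  have hsum : ∑' j, P (E (j + 1)) ≠ ∞ := by
    refine ne_top_of_le_ne_top (ENNReal.mul_ne_top hc
      (tsum_natCast_pow_mul_ofReal_rpow_ne_top (by positivity) hs1 hη b)) ?_
    calc ∑' j, P (E (j + 1)) ≤ ∑' j, c * g (j + 1) := ENNReal.tsum_le_tsum hE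
      _ = c * ∑' j, g (j + 1) := ENNReal.tsum_mul_left
      _ ≤ c * ∑' j, g j :=
        mul_le_mul' le_rfl (ENNReal.tsum_comp_le_tsum_of_injective (add_left_injective 1) g)
  filter_upwards [ae_eventually_notMem hsum] with ω hω
  obtain ⟨J, hJ⟩ := eventually_atTop.mp hω
  refine ⟨J + 1, fun j hj w hw n hn ↦ ?_⟩
  obtain ⟨i, rfl⟩ : ∃ i, j = i + 1 := ⟨j - 1, by omega⟩
  have hωi := hJ i (by omega)
  simp only [E, Set.mem_iUnion, not_exists] at hωi
  exact fun _ _ ↦ abs_sub_le_of_forall_notMem_dyadicIncrementExceeds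
    (hωi w (Finset.mem_range.mpr hw) n hn)

/-- Hölder-type chaining estimate on dyadic points, uniformly over the `b^j` words of each
generation `j` (words `w ∈ A^j` are encoded by their index `w < b^j`):  if
`E(|Y^w_q - Y^w_{q'}|^h) ≤ C|q - q'|^h` on the compact interval `K = [u,v]`, then almost surely,
for all large `j`, all `w ∈ A^j`, all `n ≥ j^{1+η}` and all adjacent dyadic points
`q, q' ∈ K` of generation `n`, one has `|Y^w_q - Y^w_{q'}| ≤ |q - q'|^α`. -/
theorem holder_on_dyadics
    {Ω : Type*} [MeasurableSpace Ω] (P : Measure Ω) [IsProbabilityMeasure P]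
    (b : ℕ) (hb : 2 ≤ b) (u v : ℝ) (huv : u < v)
    (h C α η : ℝ) (hh : 1 < h) (hC : 0 < C) (hα : 0 < α) (hαh : α < (h - 1) / h)
    (hη : 0 < η)
    (Y : ℕ → ℕ → ℝ → Ω → ℝ)
    (hYmeas : ∀ j w q, Measurable (Y j w q))
    (hmom : ∀ j w, 1 ≤ j → w < b ^ j → ∀ q q' : ℝ,
      q ∈ Set.Icc u v → q' ∈ Set.Icc u v →
      ∫⁻ ω, ENNReal.ofReal (|Y j w q ω - Y j w q' ω| ^ h) ∂P
        ≤ ENNReal.ofReal (C * |q - q'| ^ h)) :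
    ∀ᵐ ω ∂P, ∃ J : ℕ, ∀ j, J ≤ j → ∀ w, w < b ^ j →
      ∀ n : ℕ, (j : ℝ) ^ ((1:ℝ) + η) ≤ (n : ℝ) →
      ∀ q q' : ℝ, q ∈ Set.Icc u v → q' ∈ Set.Icc u v →
        (∃ k : ℤ, q = (k : ℝ) / 2 ^ n) → (∃ k : ℤ, q' = (k : ℝ) / 2 ^ n) →
        |q - q'| = 1 / 2 ^ n →
        |Y j w q ω - Y j w q' ω| ≤ |q - q'| ^ α :=
  holder_on_dyadics_general P b u v huv h C α η hh hαh hη Y hYmeas hmom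
end

section
/- Fix an integer b ≥ 2, constants C > 0, x₀ > 0, γ ∈ (0,1), θ > 0 with θγ/(1−γ) > 1, and δ ∈ ((θγ/(1−γ))^{−1}, 1). Suppose that for all integers j, n ≥ 1 and all words w ∈ A^j, v ∈ A^n one is given a nonnegative random variable Z^{w,v} such that ℙ(Z^{w,v} ≤ x) ≤ exp(−C x^{−γ/(1−γ)}) for every x ∈ (0, x₀]. Then with probability one, for all sufficiently large j, for every integer n ≥ j^δ and all w ∈ A^j, v ∈ A^n, one has Z^{w,v} ≥ n^{−θ}. -/
open MeasureTheory Filter Real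
open scoped ENNReal

/-!
With `α = θγ/(1-γ)`, the tail bound at `x = n^{-θ}` gives `ℙ(Z^{w,v} < n^{-θ}) ≤ exp(-C n^α)`.
Since `α > 1` and `δα > 1`, for large `j` and `n ≥ j^δ` the exponent `C n^α` dominates
`(log b + 1)(j + n)`, so a union bound over the `b^{j+n}` pairs of words and over `n` bounds
the probability of a bad level `j` by a constant times `e^{-j}`. Borel–Cantelli concludes.
-/

lemma eventually_mul_add_le_mul_rpow {L C α δ : ℝ} (hC : 0 < C) (hδ : 0 < δ) (hα : 1 < α)
    (hδα : 1 < δ * α) :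
    ∀ᶠ s : ℝ in atTop, ∀ t : ℝ, s ^ δ ≤ t → L * (s + t) ≤ C * t ^ α := by
  have hs : ∀ᶠ s : ℝ in atTop, 2 * L ≤ C * s ^ (δ * α - 1) :=
    ((tendsto_rpow_atTop (by linarith)).const_mul_atTop hC).eventually_ge_atTop _
  have ht : ∀ᶠ s : ℝ in atTop, 2 * L ≤ C * (s ^ δ) ^ (α - 1) :=
    (((tendsto_rpow_atTop (by linarith)).comp (tendsto_rpow_atTop hδ)).const_mul_atTop
      hC).eventually_ge_atTop _
  filter_upwards [eventually_gt_atTop 0, hs, ht] with s hs0 hs ht t hst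
  have ht0 : 0 < t := (rpow_pos_of_pos hs0 δ).trans_le hst
  have hLt : 2 * L * t ≤ C * t ^ α := calc
    2 * L * t ≤ C * (s ^ δ) ^ (α - 1) * t := by gcongr
    _ ≤ C * t ^ (α - 1) * t := by gcongr
    _ = C * t ^ α := by rw [mul_assoc, ← rpow_add_one ht0.ne', sub_add_cancel]
  have hLs : 2 * L * s ≤ C * t ^ α := calc
    2 * L * s ≤ C * s ^ (δ * α - 1) * s := by gcongr
    _ = C * (s ^ δ) ^ α := by
      rw [mul_assoc, ← rpow_add_one hs0.ne', sub_add_cancel, rpow_mul hs0.le]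
    _ ≤ C * t ^ α := by gcongr
  linarith

lemma pow_mul_exp_neg_le_exp_neg_one_pow {b a : ℝ} (hb : 0 < b) {k : ℕ}
    (h : (log b + 1) * k ≤ a) : b ^ k * exp (-a) ≤ exp (-1) ^ k := by
  rw [← exp_log hb, ← exp_nat_mul, ← exp_nat_mul, ← exp_add, exp_le_exp]
  linarith

lemma measure_setOf_exists_lt_exists_lt_le {α : Type*} [MeasurableSpace α] (μ : Measure α)
    {M N : ℕ} (s : ℕ → ℕ → Set α) {c : ℝ≥0∞} (hs : ∀ w < M, ∀ v < N, μ (s w v) ≤ c) :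
    μ {x | ∃ w < M, ∃ v < N, x ∈ s w v} ≤ M * N * c := by
  have hunion : {x | ∃ w < M, ∃ v < N, x ∈ s w v} =
      ⋃ w ∈ Finset.range M, ⋃ v ∈ Finset.range N, s w v := by
    ext; simp
  rw [hunion]
  calc _ ≤ ∑ w ∈ Finset.range M, ∑ v ∈ Finset.range N, μ (s w v) :=
        (measure_biUnion_finset_le _ _).trans
          (Finset.sum_le_sum fun w _ => measure_biUnion_finset_le _ _)
    _ ≤ ∑ w ∈ Finset.range M, ∑ v ∈ Finset.range N, c := by
        gcongr with w hw v hv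
        exact hs w (Finset.mem_range.1 hw) v (Finset.mem_range.1 hv)
    _ = M * N * c := by simp [mul_assoc]

lemma ae_eventually_notMem_of_eventually_measure_le {α : Type*} [MeasurableSpace α]
    {μ : Measure α} {s : ℕ → Set α} {f : ℕ → ℝ≥0∞} (hs : ∀ᶠ j in atTop, μ (s j) ≤ f j)
    (hf : ∑' j, f j ≠ ∞) : ∀ᵐ x ∂μ, ∀ᶠ j in atTop, x ∉ s j := by
  obtain ⟨J, hJ⟩ := eventually_atTop.1 hs
  let t : ℕ → Set α := fun j => if J ≤ j then s j else ∅
  have ht : ∀ j, μ (t j) ≤ f j := fun j => by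
    by_cases hj : J ≤ j <;> simp [t, hj, hJ]
  filter_upwards [ae_eventually_notMem (ne_top_of_le_ne_top hf (ENNReal.tsum_le_tsum ht))]
    with x hx
  filter_upwards [hx, eventually_ge_atTop J] with j hj hJj
  simpa [t, hJj] using hj

lemma measure_exists_words_lt_le {Ω : Type*} [MeasurableSpace Ω] (μ : Measure Ω) {b j : ℕ}
    (hb : 0 < b) {N : ℝ} (Y : ℕ → ℕ → ℕ → Ω → ℝ) (x a : ℕ → ℝ)
    (hY : ∀ n : ℕ, N ≤ n → ∀ w < b ^ j, ∀ v < b ^ n,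
      μ {ω | Y w n v ω ≤ x n} ≤ ENNReal.ofReal (exp (-a n)))
    (ha : ∀ n : ℕ, N ≤ n → (log b + 1) * (j + n) ≤ a n) :
    μ {ω | ∃ n : ℕ, N ≤ n ∧ ∃ w < b ^ j, ∃ v < b ^ n, Y w n v ω < x n} ≤
      ENNReal.ofReal (exp (-1)) ^ j * (1 - ENNReal.ofReal (exp (-1)))⁻¹ := by
  set r := ENNReal.ofReal (exp (-1))
  have hn : ∀ n : ℕ, μ {ω | N ≤ n ∧ ∃ w < b ^ j, ∃ v < b ^ n, Y w n v ω < x n} ≤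
      r ^ j * r ^ n := by
    intro n
    by_cases hN : N ≤ n
    · calc _ ≤ μ {ω | ∃ w < b ^ j, ∃ v < b ^ n, ω ∈ {ω | Y w n v ω ≤ x n}} :=
            measure_mono <| by rintro ω ⟨-, w, hw, v, hv, h⟩; exact ⟨w, hw, v, hv, h.le⟩
        _ ≤ (b ^ j : ℕ) * (b ^ n : ℕ) * ENNReal.ofReal (exp (-a n)) :=
            measure_setOf_exists_lt_exists_lt_le μ _ (hY n hN)
        _ = ENNReal.ofReal ((b : ℝ) ^ (j + n) * exp (-a n)) := by
            rw [ENNReal.ofReal_mul (by positivity), pow_add, ENNReal.ofReal_mul (by positivity)]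
            norm_cast
        _ ≤ ENNReal.ofReal (exp (-1) ^ (j + n)) :=
            ENNReal.ofReal_le_ofReal <| pow_mul_exp_neg_le_exp_neg_one_pow (by exact_mod_cast hb)
              (by exact_mod_cast ha n hN)
        _ = r ^ j * r ^ n := by rw [ENNReal.ofReal_pow (exp_nonneg _), pow_add]
    · simp [hN]
  calc _ = μ (⋃ n : ℕ, {ω | N ≤ n ∧ ∃ w < b ^ j, ∃ v < b ^ n, Y w n v ω < x n}) := by
        rw [Set.ofPred_exists]
    _ ≤ ∑' n, r ^ j * r ^ n := (measure_iUnion_le _).trans (ENNReal.tsum_le_tsum hn)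
    _ = r ^ j * (1 - r)⁻¹ := by rw [ENNReal.tsum_mul_left, ENNReal.tsum_geometric]

theorem lower_bound_uniform_double_general
    {Ω : Type*} [MeasurableSpace Ω] (P : Measure Ω) [IsProbabilityMeasure P]
    (b : ℕ) (hb : 2 ≤ b)
    (C x₀ γ θ δ : ℝ) (hC : 0 < C) (hx₀ : 0 < x₀)
    (hθ : 0 < θ) (hθγ : 1 < θ * γ / (1 - γ))
    (hδ : δ ∈ Set.Ioo ((θ * γ / (1 - γ))⁻¹) 1)
    (Z : ℕ → ℕ → ℕ → ℕ → Ω → ℝ)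
    (htail : ∀ j w n v, 1 ≤ j → w < b ^ j → 1 ≤ n → v < b ^ n →
      ∀ x ∈ Set.Ioc (0:ℝ) x₀,
      P {ω | Z j w n v ω ≤ x} ≤ ENNReal.ofReal (Real.exp (-C * x ^ (-(γ / (1 - γ)))))) :
    ∀ᵐ ω ∂P, ∃ J : ℕ, ∀ j, J ≤ j → ∀ n : ℕ, (j : ℝ) ^ δ ≤ (n : ℝ) →
      ∀ w, w < b ^ j → ∀ v, v < b ^ n →
      (n : ℝ) ^ (-θ) ≤ Z j w n v ω := by
  have hα : 0 < θ * γ / (1 - γ) := one_pos.trans hθγ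
  have hδ0 : 0 < δ := (inv_pos.2 hα).trans hδ.1
  have hδα : 1 < δ * (θ * γ / (1 - γ)) := (inv_lt_iff_one_lt_mul₀ hα).1 hδ.1
  have hlarge : ∀ᶠ s : ℝ in atTop, ∀ t, s ^ δ ≤ t → 1 ≤ t ∧ t ^ (-θ) ≤ x₀ :=
    (tendsto_rpow_atTop hδ0).eventually_forall_ge_atTop <| (eventually_ge_atTop 1).and <|
      (tendsto_rpow_neg_atTop hθ).eventually (eventually_le_nhds hx₀)
  have hgood := tendsto_natCast_atTop_atTop.eventually
    (hlarge.and (eventually_mul_add_le_mul_rpow hC hδ0 hθγ hδα (L := log b + 1)))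
  set r := ENNReal.ofReal (exp (-1))
  have hbad : ∀ᶠ j : ℕ in atTop, P {ω | ∃ n : ℕ, (j : ℝ) ^ δ ≤ n ∧
      ∃ w < b ^ j, ∃ v < b ^ n, Z j w n v ω < (n : ℝ) ^ (-θ)} ≤ r ^ j * (1 - r)⁻¹ := by
    filter_upwards [hgood, eventually_ge_atTop 1] with j ⟨hj, hjn⟩ hj1
    refine measure_exists_words_lt_le P (by omega) (Z j) _ (fun n => C * n ^ (θ * γ / (1 - γ)))
      (fun n hn w hw v hv => ?_) (fun n hn => by simpa [add_comm] using hjn n hn)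
    obtain ⟨hn1, hx⟩ := hj n hn
    have := htail j w n v hj1 hw (by exact_mod_cast hn1) hv _ ⟨by positivity, hx⟩
    rwa [← rpow_mul n.cast_nonneg, neg_mul_neg, ← mul_div_assoc, neg_mul] at this
  have hD : (1 - r)⁻¹ ≠ ∞ := ENNReal.inv_ne_top.2 <| (tsub_pos_of_lt <|
    ENNReal.ofReal_lt_one.2 <| exp_lt_one_iff.2 <| by norm_num).ne'
  have hsum : ∑' j, r ^ j * (1 - r)⁻¹ ≠ ∞ := by
    rw [ENNReal.tsum_mul_right, ENNReal.tsum_geometric]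
    exact ENNReal.mul_ne_top hD hD
  filter_upwards [ae_eventually_notMem_of_eventually_measure_le hbad hsum] with ω hω
  obtain ⟨J, hJ⟩ := eventually_atTop.1 hω
  exact ⟨J, fun j hj n hn w hw v hv => not_lt.1 fun hlt => hJ j hj ⟨n, hn, w, hw, v, hv, hlt⟩⟩

/-- Double-index version: the nonnegative variables `Z^{w,v}`, `w ∈ A^j`, `v ∈ A^n`
(words encoded by `w < b^j`, `v < b^n`), satisfy the lower-tail bound
`ℙ(Z^{w,v} ≤ x) ≤ exp(-C x^{-γ/(1-γ)})` for small `x`.  If `θγ/(1-γ) > 1` and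
`δ ∈ ((θγ/(1-γ))⁻¹, 1)`, then almost surely, for all large `j`, for every `n ≥ j^δ`
and all `w ∈ A^j`, `v ∈ A^n`, one has `Z^{w,v} ≥ n^{-θ}`. -/
theorem lower_bound_uniform_double
    {Ω : Type*} [MeasurableSpace Ω] (P : Measure Ω) [IsProbabilityMeasure P]
    (b : ℕ) (hb : 2 ≤ b)
    (C x₀ γ θ δ : ℝ) (hC : 0 < C) (hx₀ : 0 < x₀) (hγ : γ ∈ Set.Ioo (0:ℝ) 1)
    (hθ : 0 < θ) (hθγ : 1 < θ * γ / (1 - γ))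
    (hδ : δ ∈ Set.Ioo ((θ * γ / (1 - γ))⁻¹) 1)
    (Z : ℕ → ℕ → ℕ → ℕ → Ω → ℝ) (hZnn : ∀ j w n v ω, 0 ≤ Z j w n v ω)
    (htail : ∀ j w n v, 1 ≤ j → w < b ^ j → 1 ≤ n → v < b ^ n →
      ∀ x ∈ Set.Ioc (0:ℝ) x₀,
      P {ω | Z j w n v ω ≤ x} ≤ ENNReal.ofReal (Real.exp (-C * x ^ (-(γ / (1 - γ)))))) :
    ∀ᵐ ω ∂P, ∃ J : ℕ, ∀ j, J ≤ j → ∀ n : ℕ, (j : ℝ) ^ δ ≤ (n : ℝ) →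
      ∀ w, w < b ^ j → ∀ v, v < b ^ n →
      (n : ℝ) ^ (-θ) ≤ Z j w n v ω :=
  lower_bound_uniform_double_general P b hb C x₀ γ θ δ hC hx₀ hθ hθγ hδ Z htail
end

section
/- (Kolmogorov chaining.) Let α ∈ (0,1], N a nonnegative integer, and let f : [u,v] → ℝ be a continuous function on a compact interval [u,v] whose endpoints are dyadic rationals. Suppose that for every integer n ≥ N and every pair of dyadic rationals q, q' ∈ [u,v] of generation n with |q − q'| = 2^{−n}, one has |f(q) − f(q')| ≤ 2^{−nα}. Then there exists a constant C depending only on α (not on f, N, u, v) such that |f(q) − f(q')| ≤ C|q − q'|^α for all q, q' ∈ [u,v] with |q − q'| ≤ 2^{−N}. -/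
/-!
Put `r = 2^{-α} < 1`. A point `x` is approached from above by the dyadics `⌈2^j x⌉ / 2^j` and
from below by `⌊2^j x⌋ / 2^j`; consecutive terms of either sequence coincide or are adjacent
dyadics of generation `j + 1`, so continuity and a geometric series give
`|f x - f (⌈2^m x⌉ / 2^m)| ≤ r^{m+1} / (1 - r)`, and likewise for the floor. If
`2^{-m} < q' - q ≤ 2^{1-m}`, the generation-`m` dyadics `⌈2^m q⌉ / 2^m` and `⌊2^m q'⌋ / 2^m`
lie in `[q, q']` at most two steps apart, whence
`|f q' - f q| ≤ 2 r^m / (1 - r) ≤ 2 / (1 - r) · |q' - q|^α`.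
-/

open Filter Set Topology

lemma Int.ceil_two_mul_mem_Icc (y : ℝ) : ⌈2 * y⌉ ∈ Icc (2 * ⌈y⌉ - 1) (2 * ⌈y⌉) := by
  constructor
  · rw [Int.le_ceil_iff]
    push_cast
    linarith [Int.ceil_lt_add_one y]
  · rw [Int.ceil_le]
    push_cast
    linarith [Int.le_ceil y]

lemma Int.floor_two_mul_mem_Icc (y : ℝ) : ⌊2 * y⌋ ∈ Icc (2 * ⌊y⌋) (2 * ⌊y⌋ + 1) := by
  constructor
  · rw [Int.le_floor]
    push_cast
    linarith [Int.floor_le y]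
  · rw [Int.floor_le_iff]
    push_cast
    linarith [Int.lt_floor_add_one y]

lemma two_mul_div_two_pow_succ (a : ℝ) (j : ℕ) : 2 * a / 2 ^ (j + 1) = a / 2 ^ j := by
  rw [pow_succ', mul_div_mul_left _ _ two_ne_zero]

lemma two_pow_succ_mul (x : ℝ) (j : ℕ) : 2 ^ (j + 1) * x = 2 * (2 ^ j * x) := by
  rw [pow_succ', mul_assoc]

lemma antitone_ceil_div_two_pow (x : ℝ) : Antitone fun j : ℕ ↦ (⌈2 ^ j * x⌉ : ℝ) / 2 ^ j := by
  refine antitone_nat_of_succ_le fun j ↦ ?_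
  have h := (Int.ceil_two_mul_mem_Icc (2 ^ j * x)).2
  rw [← two_pow_succ_mul] at h
  rw [← two_mul_div_two_pow_succ (⌈2 ^ j * x⌉ : ℝ)]
  gcongr
  exact_mod_cast h

lemma monotone_floor_div_two_pow (x : ℝ) : Monotone fun j : ℕ ↦ (⌊2 ^ j * x⌋ : ℝ) / 2 ^ j := by
  refine monotone_nat_of_le_succ fun j ↦ ?_
  have h := (Int.floor_two_mul_mem_Icc (2 ^ j * x)).1
  rw [← two_pow_succ_mul] at h
  rw [← two_mul_div_two_pow_succ (⌊2 ^ j * x⌋ : ℝ)]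
  gcongr
  exact_mod_cast h

lemma le_ceil_div_two_pow (x : ℝ) (j : ℕ) : x ≤ (⌈2 ^ j * x⌉ : ℝ) / 2 ^ j := by
  rw [le_div_iff₀ (by positivity), mul_comm]
  exact Int.le_ceil _

lemma floor_div_two_pow_le (x : ℝ) (j : ℕ) : (⌊2 ^ j * x⌋ : ℝ) / 2 ^ j ≤ x := by
  rw [div_le_iff₀ (by positivity), mul_comm]
  exact Int.floor_le _

lemma ceil_div_two_pow_sub_lt (x : ℝ) (j : ℕ) : (⌈2 ^ j * x⌉ : ℝ) / 2 ^ j - x < 1 / 2 ^ j := by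
  rw [div_sub' (by positivity), div_lt_div_iff_of_pos_right (by positivity)]
  linarith [Int.ceil_lt_add_one (2 ^ j * x)]

lemma sub_floor_div_two_pow_lt (x : ℝ) (j : ℕ) : x - (⌊2 ^ j * x⌋ : ℝ) / 2 ^ j < 1 / 2 ^ j := by
  rw [sub_div' (by positivity), div_lt_div_iff_of_pos_right (by positivity)]
  linarith [Int.lt_floor_add_one (2 ^ j * x)]

lemma tendsto_of_abs_sub_le_one_div_two_pow {p : ℕ → ℝ} {x : ℝ} (h : ∀ j, |p j - x| ≤ 1 / 2 ^ j) :
    Tendsto p atTop (𝓝 x) := by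
  refine tendsto_iff_norm_sub_tendsto_zero.2 (squeeze_zero (fun _ ↦ norm_nonneg _) h ?_)
  simpa only [one_div_pow] using
    tendsto_pow_atTop_nhds_zero_of_lt_one (by norm_num : (0 : ℝ) ≤ 1 / 2) (by norm_num)

lemma tendsto_ceil_div_two_pow (x : ℝ) :
    Tendsto (fun j : ℕ ↦ (⌈2 ^ j * x⌉ : ℝ) / 2 ^ j) atTop (𝓝 x) :=
  tendsto_of_abs_sub_le_one_div_two_pow fun j ↦ by
    rw [abs_of_nonneg (sub_nonneg.2 (le_ceil_div_two_pow x j))]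
    exact (ceil_div_two_pow_sub_lt x j).le

lemma tendsto_floor_div_two_pow (x : ℝ) :
    Tendsto (fun j : ℕ ↦ (⌊2 ^ j * x⌋ : ℝ) / 2 ^ j) atTop (𝓝 x) :=
  tendsto_of_abs_sub_le_one_div_two_pow fun j ↦ by
    rw [abs_sub_comm, abs_of_nonneg (sub_nonneg.2 (floor_div_two_pow_le x j))]
    exact (sub_floor_div_two_pow_lt x j).le

def DyadicIncrementsLE (N : ℕ) (r : ℝ) (s : Set ℝ) (f : ℝ → ℝ) : Prop :=
  ∀ n, N ≤ n → ∀ k : ℤ, (k : ℝ) / 2 ^ n ∈ s → ((k : ℝ) + 1) / 2 ^ n ∈ s →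
    |f (((k : ℝ) + 1) / 2 ^ n) - f (k / 2 ^ n)| ≤ r ^ n

namespace DyadicIncrementsLE

variable {N n m : ℕ} {r x : ℝ} {s : Set ℝ} {f : ℝ → ℝ}

lemma abs_sub_le_mul (H : DyadicIncrementsLE N r s f) (hs : s.OrdConnected) (hn : N ≤ n)
    {k l : ℤ} (hkl : k ≤ l) (hk : (k : ℝ) / 2 ^ n ∈ s) (hl : (l : ℝ) / 2 ^ n ∈ s) :
    |f (l / 2 ^ n) - f (k / 2 ^ n)| ≤ (l - k) * r ^ n := by
  induction l, hkl using Int.leInduction with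
  | base => simp
  | succ l hkl ih =>
    push_cast at hl ⊢
    have hl' : (l : ℝ) / 2 ^ n ∈ s := hs.out hk hl
      ⟨by gcongr, by gcongr; linarith⟩
    calc |f ((l + 1) / 2 ^ n) - f (k / 2 ^ n)|
        ≤ |f ((l + 1) / 2 ^ n) - f (l / 2 ^ n)| + |f (l / 2 ^ n) - f (k / 2 ^ n)| :=
          abs_sub_le _ _ _
      _ ≤ r ^ n + (l - k) * r ^ n := add_le_add (H n hn l hl' hl) (ih hl')
      _ = (l + 1 - k) * r ^ n := by ring

lemma abs_sub_le_abs_sub_mul (H : DyadicIncrementsLE N r s f) (hs : s.OrdConnected) (hn : N ≤ n)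
    {k l : ℤ} (hk : (k : ℝ) / 2 ^ n ∈ s) (hl : (l : ℝ) / 2 ^ n ∈ s) :
    |f (l / 2 ^ n) - f (k / 2 ^ n)| ≤ |(l : ℝ) - k| * r ^ n := by
  rcases le_total k l with hkl | hlk
  · rw [abs_of_nonneg (a := (l : ℝ) - k) (sub_nonneg.2 (by exact_mod_cast hkl))]
    exact H.abs_sub_le_mul hs hn hkl hk hl
  · rw [abs_sub_comm, abs_sub_comm (l : ℝ),
      abs_of_nonneg (a := (k : ℝ) - l) (sub_nonneg.2 (by exact_mod_cast hlk))]
    exact H.abs_sub_le_mul hs hn hlk hl hk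

lemma abs_sub_le_of_tendsto (H : DyadicIncrementsLE N r s f) (hs : s.OrdConnected)
    (hr₀ : 0 ≤ r) (hr₁ : r < 1) (hm : N ≤ m) (hf : ContinuousWithinAt f s x)
    {k : ℕ → ℤ} (hstep : ∀ j, |k (j + 1) - 2 * k j| ≤ 1)
    (hmem : ∀ j, m ≤ j → (k j : ℝ) / 2 ^ j ∈ s)
    (hlim : Tendsto (fun j ↦ (k j : ℝ) / 2 ^ j) atTop (𝓝 x)) :
    |f x - f (k m / 2 ^ m)| ≤ r ^ (m + 1) / (1 - r) := by
  set u : ℕ → ℝ := fun j ↦ f (k (j + m) / 2 ^ (j + m))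
  have hu : ∀ j, dist (u j) (u (j + 1)) ≤ r ^ (m + 1) * r ^ j := fun j ↦ by
    have hgen : N ≤ j + m + 1 := by omega
    have h2k : ((2 * k (j + m) : ℤ) : ℝ) / 2 ^ (j + m + 1) = k (j + m) / 2 ^ (j + m) := by
      push_cast; exact two_mul_div_two_pow_succ _ _
    have hstep' : |(k (j + m + 1) : ℝ) - (2 * k (j + m) : ℤ)| ≤ 1 := mod_cast hstep (j + m)
    rw [Real.dist_eq, abs_sub_comm, ← pow_add, show m + 1 + j = j + m + 1 by omega]
    simp only [u, Nat.add_right_comm j 1 m]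
    have := H.abs_sub_le_abs_sub_mul hs hgen (k := 2 * k (j + m)) (l := k (j + m + 1))
      (h2k ▸ hmem _ (by omega)) (hmem _ (by omega))
    rw [h2k] at this
    exact this.trans (mul_le_of_le_one_left (by positivity) hstep')
  have hu_lim : Tendsto u atTop (𝓝 (f x)) := by
    refine hf.tendsto.comp (tendsto_nhdsWithin_iff.2 ⟨?_, ?_⟩)
    · exact hlim.comp (tendsto_add_atTop_nat m)
    · exact Eventually.of_forall fun j ↦ hmem _ (by omega)
  simpa [u, Real.dist_eq, abs_sub_comm] using
    dist_le_of_le_geometric_of_tendsto₀ r (r ^ (m + 1)) hr₁ hu hu_lim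

lemma abs_sub_ceil_le (H : DyadicIncrementsLE N r s f) (hs : s.OrdConnected)
    (hr₀ : 0 ≤ r) (hr₁ : r < 1) (hm : N ≤ m) (hx : x ∈ s) (hf : ContinuousWithinAt f s x)
    (hxm : (⌈2 ^ m * x⌉ : ℝ) / 2 ^ m ∈ s) :
    |f x - f (⌈2 ^ m * x⌉ / 2 ^ m)| ≤ r ^ (m + 1) / (1 - r) := by
  refine H.abs_sub_le_of_tendsto hs hr₀ hr₁ hm hf (k := fun j ↦ ⌈2 ^ j * x⌉) (fun j ↦ ?_)
    (fun j hj ↦ hs.out hx hxm ⟨le_ceil_div_two_pow x j, antitone_ceil_div_two_pow x hj⟩)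
    (tendsto_ceil_div_two_pow x)
  obtain ⟨h₁, h₂⟩ := two_pow_succ_mul x j ▸ Int.ceil_two_mul_mem_Icc (2 ^ j * x)
  exact abs_le.2 ⟨by omega, by omega⟩

lemma abs_sub_floor_le (H : DyadicIncrementsLE N r s f) (hs : s.OrdConnected)
    (hr₀ : 0 ≤ r) (hr₁ : r < 1) (hm : N ≤ m) (hx : x ∈ s) (hf : ContinuousWithinAt f s x)
    (hxm : (⌊2 ^ m * x⌋ : ℝ) / 2 ^ m ∈ s) :
    |f x - f (⌊2 ^ m * x⌋ / 2 ^ m)| ≤ r ^ (m + 1) / (1 - r) := by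
  refine H.abs_sub_le_of_tendsto hs hr₀ hr₁ hm hf (k := fun j ↦ ⌊2 ^ j * x⌋) (fun j ↦ ?_)
    (fun j hj ↦ hs.out hxm hx ⟨monotone_floor_div_two_pow x hj, floor_div_two_pow_le x j⟩)
    (tendsto_floor_div_two_pow x)
  obtain ⟨h₁, h₂⟩ := two_pow_succ_mul x j ▸ Int.floor_two_mul_mem_Icc (2 ^ j * x)
  exact abs_le.2 ⟨by omega, by omega⟩

lemma abs_sub_le_of_abs_sub_mem_Ioc (H : DyadicIncrementsLE N r s f) (hs : s.OrdConnected)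
    (hr₀ : 0 ≤ r) (hr₁ : r < 1) (hf : ContinuousOn f s) (hm : N ≤ m) {q q' : ℝ}
    (hq : q ∈ s) (hq' : q' ∈ s) (hqq' : |q' - q| ∈ Ioc (1 / 2 ^ m) (2 / 2 ^ m)) :
    |f q' - f q| ≤ 2 * r ^ m / (1 - r) := by
  obtain ⟨hlo, hhi⟩ := hqq'
  have hne : q' ≠ q := abs_sub_pos.1 ((by positivity : (0 : ℝ) < 1 / 2 ^ m).trans hlo)
  wlog hlt : q < q' generalizing q q'
  · rw [abs_sub_comm] at hlo hhi ⊢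
    exact this hq' hq hlo hhi hne.symm (hne.lt_or_gt.resolve_right hlt)
  rw [abs_of_pos (sub_pos.2 hlt)] at hlo hhi
  set a := ⌈2 ^ m * q⌉
  set b := ⌊2 ^ m * q'⌋
  have ha₁ := le_ceil_div_two_pow q m
  have ha₂ := ceil_div_two_pow_sub_lt q m
  have hb₁ := floor_div_two_pow_le q' m
  have hb₂ := sub_floor_div_two_pow_lt q' m
  have has : (a : ℝ) / 2 ^ m ∈ s := hs.out hq hq' ⟨ha₁, by linarith⟩
  have hbs : (b : ℝ) / 2 ^ m ∈ s := hs.out hq hq' ⟨by linarith, hb₁⟩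
  have hab : |(b : ℝ) - a| ≤ 2 := by
    have : |(b : ℝ) / 2 ^ m - a / 2 ^ m| ≤ 2 / 2 ^ m := abs_le.2 ⟨by linarith, by linarith⟩
    rwa [← sub_div, abs_div, abs_of_pos (by positivity : (0 : ℝ) < 2 ^ m),
      div_le_div_iff_of_pos_right (by positivity)] at this
  have hmid : |f (b / 2 ^ m) - f (a / 2 ^ m)| ≤ 2 * r ^ m :=
    (H.abs_sub_le_abs_sub_mul hs hm has hbs).trans (by gcongr)
  have hq_tail := H.abs_sub_ceil_le hs hr₀ hr₁ hm hq (hf q hq) has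
  have hq'_tail := H.abs_sub_floor_le hs hr₀ hr₁ hm hq' (hf q' hq') hbs
  have h1r : 0 < 1 - r := sub_pos.2 hr₁
  calc |f q' - f q|
      ≤ |f q' - f (b / 2 ^ m)| + |f (b / 2 ^ m) - f (a / 2 ^ m)| + |f q - f (a / 2 ^ m)| := by
        rw [abs_sub_comm (f q)]
        linarith [abs_sub_le (f q') (f (b / 2 ^ m)) (f q),
          abs_sub_le (f (b / 2 ^ m)) (f (a / 2 ^ m)) (f q)]
    _ ≤ r ^ (m + 1) / (1 - r) + 2 * r ^ m + r ^ (m + 1) / (1 - r) := by gcongr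
    _ = 2 * r ^ m / (1 - r) := by field_simp; ring

end DyadicIncrementsLE

/-- Kolmogorov chaining: if a continuous function on a compact interval with dyadic endpoints
has increments at most `2^{-nα}` between adjacent dyadic points of every generation `n ≥ N`,
then it is `α`-Hölder with a constant `C` depending only on `α`, at scales `≤ 2^{-N}`. -/
theorem kolmogorov_chaining (α : ℝ) (hα : α ∈ Set.Ioc (0:ℝ) 1) :
    ∃ C : ℝ, ∀ (N : ℕ) (u v : ℝ) (f : ℝ → ℝ),
      (∃ (n : ℕ) (k : ℤ), u = (k : ℝ) / 2 ^ n) →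
      (∃ (n : ℕ) (k : ℤ), v = (k : ℝ) / 2 ^ n) →
      u ≤ v → ContinuousOn f (Set.Icc u v) →
      (∀ n : ℕ, N ≤ n → ∀ q q' : ℝ, q ∈ Set.Icc u v → q' ∈ Set.Icc u v →
        (∃ k : ℤ, q = (k : ℝ) / 2 ^ n) → (∃ k : ℤ, q' = (k : ℝ) / 2 ^ n) →
        |q - q'| = 1 / 2 ^ n → |f q - f q'| ≤ ((1:ℝ) / 2 ^ n) ^ α) →
      ∀ q q' : ℝ, q ∈ Set.Icc u v → q' ∈ Set.Icc u v → |q - q'| ≤ 1 / 2 ^ N →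
        |f q - f q'| ≤ C * |q - q'| ^ α := by
  set r : ℝ := (1 / 2) ^ α
  have hr₀ : 0 ≤ r := by positivity
  have hr₁ : r < 1 := Real.rpow_lt_one (by norm_num) (by norm_num) hα.1
  have hr_pow (n : ℕ) : ((1 : ℝ) / 2 ^ n) ^ α = r ^ n := by
    rw [← one_div_pow, Real.rpow_pow_comm (by norm_num)]
  refine ⟨2 / (1 - r), fun N u v f _ _ _ hf hinc q q' hq hq' hqq' ↦ ?_⟩
  have H : DyadicIncrementsLE N r (Icc u v) f := fun n hn k hk hk₁ ↦ hr_pow n ▸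
    hinc n hn _ _ hk₁ hk ⟨k + 1, by push_cast; rfl⟩ ⟨k, rfl⟩ (by rw [← sub_div]; simp)
  rcases eq_or_ne q q' with rfl | hne
  · simp [Real.zero_rpow hα.1.ne']
  obtain ⟨n, hlo, hhi⟩ := exists_nat_pow_near_of_lt_one (abs_sub_pos.2 hne)
    (hqq'.trans (div_le_one_of_le₀ (one_le_pow₀ one_le_two) (by positivity)))
    (by norm_num : (0 : ℝ) < 1 / 2) (by norm_num)
  have hN : N ≤ n + 1 := by
    have := hlo.trans_le (one_div_pow (2 : ℝ) N ▸ hqq')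
    exact (pow_lt_pow_iff_right_of_lt_one₀ (by norm_num) (by norm_num)).1 this |>.le
  have hscale : |q - q'| ∈ Ioc (1 / 2 ^ (n + 1)) (2 / 2 ^ (n + 1)) := by
    have : (2 : ℝ) / 2 ^ (n + 1) = (1 / 2) ^ n := by
      rw [one_div_pow, ← two_mul_div_two_pow_succ 1, mul_one]
    exact ⟨one_div_pow (2 : ℝ) (n + 1) ▸ hlo, this ▸ hhi⟩
  calc |f q - f q'| ≤ 2 * r ^ (n + 1) / (1 - r) :=
        H.abs_sub_le_of_abs_sub_mem_Ioc ordConnected_Icc hr₀ hr₁ hf hN hq' hq hscale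
    _ ≤ 2 / (1 - r) * |q - q'| ^ α := by
        rw [← hr_pow, mul_div_right_comm]
        gcongr
        exacts [hα.1.le, hscale.1.le]
end

section
/- Fix an integer b ≥ 2. Let Z, Z_0, …, Z_{b−1} and W be random variables on a common probability space such that Z ≥ 0 and W > 0 almost surely, the variables Z_0, …, Z_{b−1} are independent and each has the same distribution as Z, the vector (Z_0,…,Z_{b−1}) is independent of W, and almost surely Z ≥ W ∑_{i=0}^{b−1} Z_i. Then the Laplace transform L(t) = E(exp(−tZ)) satisfies L(t) ≤ E(L(Wt)^b) for every t ≥ 0. -/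
open MeasureTheory ProbabilityTheory

/-! Since `t ≥ 0`, the domination `W ∑ Zᵢ ≤ Z` gives `E exp(-tZ) ≤ E exp(-tW ∑ Zᵢ)`. Freezing the
independent `W`, the right-hand side is `E L_S(Wt)`, and the Laplace transform of the sum `S` of the
i.i.d. copies `Zᵢ` factors as `L_S = L^b`. -/

open Function Real

namespace ProbabilityTheory

variable {Ω : Type*} [MeasurableSpace Ω] {μ : Measure Ω}

theorem IndepFun.integral_comp_eq_integral_integral {α β E : Type*} [MeasurableSpace α]
    [MeasurableSpace β] [NormedAddCommGroup E] [NormedSpace ℝ E] [IsFiniteMeasure μ]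
    {X : Ω → α} {Y : Ω → β} (hXY : IndepFun X Y μ) (hX : AEMeasurable X μ)
    (hY : AEMeasurable Y μ) {f : α → β → E} (hf : StronglyMeasurable (uncurry f))
    (hfi : Integrable (fun ω ↦ f (X ω) (Y ω)) μ) :
    ∫ ω, f (X ω) (Y ω) ∂μ = ∫ ω, ∫ ω', f (X ω) (Y ω') ∂μ ∂μ := by
  have hXY' : AEMeasurable (fun ω ↦ (X ω, Y ω)) μ := hX.prodMk hY
  have hlaw : μ.map (fun ω ↦ (X ω, Y ω)) = (μ.map X).prod (μ.map Y) :=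
    (indepFun_iff_map_prod_eq_prod_map_map hX hY).1 hXY
  have hprod : Integrable (uncurry f) ((μ.map X).prod (μ.map Y)) := by
    rw [← hlaw]
    exact (integrable_map_measure hf.aestronglyMeasurable hXY').2 hfi
  have hsection (x : α) : ∫ ω', f x (Y ω') ∂μ = ∫ y, f x y ∂μ.map Y :=
    (integral_map hY (hf.comp_measurable measurable_prodMk_left).aestronglyMeasurable).symm
  calc ∫ ω, f (X ω) (Y ω) ∂μ = ∫ p, uncurry f p ∂μ.map (fun ω ↦ (X ω, Y ω)) :=
        (integral_map hXY' hf.aestronglyMeasurable).symm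
    _ = ∫ x, ∫ y, f x y ∂μ.map Y ∂μ.map X := by rw [hlaw, integral_prod _ hprod]; rfl
    _ = ∫ ω, ∫ ω', f (X ω) (Y ω') ∂μ ∂μ := by
        simp_rw [hsection]
        exact integral_map hX hprod.integral_prod_left.aestronglyMeasurable

theorem iIndepFun.mgf_sum_eq_pow {ι : Type*} [Fintype ι] {X : ι → Ω → ℝ} {Y : Ω → ℝ}
    (h_indep : iIndepFun X μ) (h_meas : ∀ i, Measurable (X i))
    (h_ident : ∀ i, IdentDistrib (X i) Y μ μ) (t : ℝ) :
    mgf (∑ i, X i) μ t = mgf Y μ t ^ Fintype.card ι := by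
  rw [h_indep.mgf_sum h_meas, ← Finset.card_univ, ← Finset.prod_const]
  exact Finset.prod_congr rfl fun i _ ↦ by rw [mgf_congr_identDistrib (h_ident i)]

theorem integrable_exp_neg_mul_of_nonneg [IsFiniteMeasure μ] {c X : Ω → ℝ}
    (hc : AEMeasurable c μ) (hX : AEMeasurable X μ) (hc_nn : ∀ᵐ ω ∂μ, 0 ≤ c ω)
    (hX_nn : ∀ᵐ ω ∂μ, 0 ≤ X ω) : Integrable (fun ω ↦ exp (-c ω * X ω)) μ := by
  refine (integrable_const (1 : ℝ)).mono' (hc.neg.mul hX).exp.aestronglyMeasurable ?_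
  filter_upwards [hc_nn, hX_nn] with ω hcω hXω
  rw [norm_of_nonneg (exp_pos _).le, exp_le_one_iff, neg_mul, neg_nonpos]
  positivity

end ProbabilityTheory

theorem laplace_selfsimilar_inequality_general
    {Ω : Type*} [MeasurableSpace Ω] (P : Measure Ω) [IsProbabilityMeasure P]
    (b : ℕ)
    (Z W : Ω → ℝ) (Zi : Fin b → Ω → ℝ)
    (hZmeas : Measurable Z) (hWmeas : Measurable W) (hZimeas : ∀ i, Measurable (Zi i))
    (hZnn : ∀ᵐ ω ∂P, 0 ≤ Z ω) (hWpos : ∀ᵐ ω ∂P, 0 < W ω)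
    (hindep : iIndepFun Zi P)
    (hid : ∀ i, Measure.map (Zi i) P = Measure.map Z P)
    (hindepW : IndepFun (fun ω => fun i : Fin b => Zi i ω) W P)
    (hdom : ∀ᵐ ω ∂P, W ω * ∑ i : Fin b, Zi i ω ≤ Z ω)
    (t : ℝ) (ht : 0 ≤ t) :
    ∫ ω, Real.exp (-t * Z ω) ∂P ≤
      ∫ ω, (∫ ω', Real.exp (-(W ω * t) * Z ω') ∂P) ^ b ∂P := by
  set S : Ω → ℝ := fun ω ↦ ∑ i, Zi i ω
  have hident (i : Fin b) : IdentDistrib (Zi i) Z P P :=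
    ⟨(hZimeas i).aemeasurable, hZmeas.aemeasurable, hid i⟩
  have hS : Measurable S := Finset.measurable_sum _ fun i _ ↦ hZimeas i
  have hS_nn : ∀ᵐ ω ∂P, 0 ≤ S ω := by
    filter_upwards [ae_all_iff.2 fun i ↦ (hident i).symm.ae_snd measurableSet_Ici hZnn] with ω hω
    exact Finset.sum_nonneg fun i _ ↦ hω i
  have hWt_nn : ∀ᵐ ω ∂P, 0 ≤ W ω * t := by
    filter_upwards [hWpos] with ω hω using by positivity
  have hWS : IndepFun W S P :=
    (hindepW.comp (Finset.measurable_sum _ fun i _ ↦ measurable_pi_apply i) measurable_id).symm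
  have hint := integrable_exp_neg_mul_of_nonneg (hWmeas.mul_const t).aemeasurable
    hS.aemeasurable hWt_nn hS_nn
  calc ∫ ω, exp (-t * Z ω) ∂P ≤ ∫ ω, exp (-(W ω * t) * S ω) ∂P := by
        refine integral_mono_ae (integrable_exp_neg_mul_of_nonneg aemeasurable_const
          hZmeas.aemeasurable (.of_forall fun _ ↦ ht) hZnn) hint ?_
        filter_upwards [hdom] with ω hdom
        rw [exp_le_exp]
        nlinarith [mul_le_mul_of_nonneg_left hdom ht]
    _ = ∫ ω, mgf S P (-(W ω * t)) ∂P :=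
        hWS.integral_comp_eq_integral_integral hWmeas.aemeasurable hS.aemeasurable
          (f := fun w s ↦ exp (-(w * t) * s)) (by fun_prop) hint
    _ = ∫ ω, mgf Z P (-(W ω * t)) ^ b ∂P := by
        simp_rw [S, ← Finset.sum_fn, hindep.mgf_sum_eq_pow hZimeas hident, Fintype.card_fin]

/-- If `Z ≥ 0`, `W > 0` a.s., the `Z_i` (`i < b`) are i.i.d. copies of `Z` independent of `W`,
and a.s. `Z ≥ W ∑_i Z_i`, then the Laplace transform `L(t) = E(e^{-tZ})` satisfies
`L(t) ≤ E(L(W t)^b)` for all `t ≥ 0`. -/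
theorem laplace_selfsimilar_inequality
    {Ω : Type*} [MeasurableSpace Ω] (P : Measure Ω) [IsProbabilityMeasure P]
    (b : ℕ) (hb : 2 ≤ b)
    (Z W : Ω → ℝ) (Zi : Fin b → Ω → ℝ)
    (hZmeas : Measurable Z) (hWmeas : Measurable W) (hZimeas : ∀ i, Measurable (Zi i))
    (hZnn : ∀ᵐ ω ∂P, 0 ≤ Z ω) (hWpos : ∀ᵐ ω ∂P, 0 < W ω)
    (hindep : iIndepFun Zi P)
    (hid : ∀ i, Measure.map (Zi i) P = Measure.map Z P)
    (hindepW : IndepFun (fun ω => fun i : Fin b => Zi i ω) W P)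
    (hdom : ∀ᵐ ω ∂P, W ω * ∑ i : Fin b, Zi i ω ≤ Z ω)
    (t : ℝ) (ht : 0 ≤ t) :
    ∫ ω, Real.exp (-t * Z ω) ∂P ≤
      ∫ ω, (∫ ω', Real.exp (-(W ω * t) * Z ω') ∂P) ^ b ∂P :=
  laplace_selfsimilar_inequality_general P b Z W Zi hZmeas hWmeas hZimeas hZnn hWpos hindep hid
    hindepW hdom t ht
end
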